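/- Generating function identity: for a positive integer k and n >= k, sum_{m=1}^infinity f(m) z^m = [n choose k]_q * q^k z / (1 - q^k(1+z)) as formal power series in z, where f(m) = sum_{i=k}^n [i choose k]_q * q^i/(1-q^i) * h_{m-1}(q^i/(1-q^i), ..., q^n/(1-q^n)). -/

import Mathlib

open Finset

variable {F : Type*} [Field F]

/-- `(q;q)_n = (1-q)(1-q^2)...(1-q^n)` -/
def qfac (q : F) (n : ℕ) : F := ∏ j ∈ Finset.range n, (1 - q ^ (j + 1))

/-- `(z;q)_k = (1-z)(1-zq)...(1-zq^{k-1})` -/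
def qpoch (z q : F) (k : ℕ) : F := ∏ j ∈ Finset.range k, (1 - z * q ^ j)

/-- Gaussian binomial coefficient `[n choose k]_q` -/
def qbinom (q : F) (n k : ℕ) : F := qfac q n / (qfac q k * qfac q (n - k))

/-- Sum over weakly increasing `m`-tuples `lo ≤ i_1 ≤ ... ≤ i_m ≤ n` of
`∏_j q^{i_j}/(1-q^{i_j})` (equal to `1` when `m = 0`). -/
def chainSum (q : F) (lo n m : ℕ) : F :=
  ∑ c ∈ Finset.univ.filter (fun c : Fin m → Fin (n + 1) =>
      (∀ j k : Fin m, j ≤ k → c j ≤ c k) ∧ ∀ j, lo ≤ (c j : ℕ)),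
    ∏ j, q ^ (c j : ℕ) / (1 - q ^ (c j : ℕ))

/-- Complete homogeneous symmetric function `h_m` of the variables
`x lo, x (lo+1), ..., x n`. -/
def hSum {R : Type*} [CommRing R] (x : ℕ → R) (lo n m : ℕ) : R :=
  ∑ c ∈ Finset.univ.filter (fun c : Fin m → Fin (n + 1) =>
      (∀ j k : Fin m, j ≤ k → c j ≤ c k) ∧ ∀ j, lo ≤ (c j : ℕ)),
    ∏ j, x (c j : ℕ)
lemma qfac_succ (q : F) (n : ℕ) : qfac q (n+1) = qfac q n * (1 - q ^ (n+1)) :=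
  Finset.prod_range_succ _ _

lemma qfac_ne_zero (q : F) (hq : ∀ i : ℕ, 1 ≤ i → q ^ i ≠ 1) (n : ℕ) : qfac q n ≠ 0 := by
  refine Finset.prod_ne_zero_iff.mpr fun j _ => ?_
  have h := hq (j+1) (by omega)
  intro h0
  exact h (by linear_combination -h0)

lemma chainSum_zero (q : F) (lo n : ℕ) : chainSum q lo n 0 = 1 := by
  simp [chainSum]

lemma chainSum_succ (q : F) (lo n m : ℕ) :
    chainSum q lo n (m+1)
      = ∑ j ∈ Finset.Icc lo n, (q^j/(1-q^j)) * chainSum q j n m := by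
  rw [chainSum]
  rw [← Finset.sum_fiberwise_of_maps_to (g := fun c : Fin (m+1) → Fin (n+1) => (c 0 : ℕ))
    (t := Finset.Icc lo n) (fun c hc => ?_)]
  · refine Finset.sum_congr rfl fun j hj => ?_
    rw [Finset.mem_Icc] at hj
    rw [chainSum, Finset.mul_sum]
    refine Finset.sum_nbij' (fun c => Fin.tail c) (fun c => Fin.cons ⟨j, by omega⟩ c)
      ?_ ?_ ?_ ?_ ?_
    · intro c hc
      simp only [Finset.mem_filter, Finset.mem_univ, true_and] at hc ⊢
      obtain ⟨⟨hmono, hlo⟩, hc0⟩ := hc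
      refine ⟨fun a b hab => hmono a.succ b.succ (by simpa using hab), fun a => ?_⟩
      have h1 : c 0 ≤ c a.succ := hmono 0 a.succ (Fin.zero_le _)
      rw [Fin.le_def] at h1
      show j ≤ (c a.succ : ℕ)
      omega
    · intro c hc
      simp only [Finset.mem_filter, Finset.mem_univ, true_and] at hc ⊢
      obtain ⟨hmono, hlo⟩ := hc
      refine ⟨⟨fun a b hab => ?_, fun a => ?_⟩, by simp⟩
      · rw [Fin.le_def] at hab ⊢
        rcases Fin.eq_zero_or_eq_succ a with rfl | ⟨a', rfl⟩ <;>
          rcases Fin.eq_zero_or_eq_succ b with rfl | ⟨b', rfl⟩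
        · exact le_refl _
        · simpa using hlo b'
        · simp at hab
        · have := Fin.le_def.mp (hmono a' b' (by rw [Fin.le_def]; simpa using hab))
          simpa using this
      · rcases Fin.eq_zero_or_eq_succ a with rfl | ⟨a', rfl⟩
        · simpa using hj.1
        · simpa using le_trans hj.1 (hlo a')
    · intro c hc
      simp only [Finset.mem_filter, Finset.mem_univ, true_and] at hc
      have : (⟨j, by omega⟩ : Fin (n+1)) = c 0 := Fin.ext (by simpa using hc.2.symm)
      rw [this]
      exact Fin.cons_self_tail c
    · intro c hc; simp
    · intro c hc
      simp only [Finset.mem_filter, Finset.mem_univ, true_and] at hc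
      rw [Fin.prod_univ_succ]
      have h0 : ((c 0 : Fin (n+1)) : ℕ) = j := hc.2
      simp only [h0]
      rfl
  · simp only [Finset.mem_filter, Finset.mem_univ, true_and] at hc
    rw [Finset.mem_Icc]
    exact ⟨hc.2 0, Nat.lt_succ_iff.mp (c 0).isLt⟩

lemma one_sub_pow_ne (q : F) (hq : ∀ i : ℕ, 1 ≤ i → q ^ i ≠ 1) {i : ℕ} (hi : 1 ≤ i) :
    (1 : F) - q ^ i ≠ 0 := sub_ne_zero.mpr fun h => hq i hi h.symm

lemma helper (A fk fd a b : F) (hfk : fk ≠ 0) (hfd : fd ≠ 0) (ha : 1-a ≠ 0)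
    (hb : 1-b ≠ 0) (hab : 1-a*b ≠ 0) :
    A/(fk*fd) * (a/(1-a)) + A*(1-a*b)/(fk*(fd*(1-b))) * ((a*b)/(1-a*b))
      = A*(1-a*b)/(fk*(fd*(1-b))) * (a/(1-a)) := by
  rw [div_mul_div_comm, div_mul_div_comm, div_mul_div_comm]
  have d1 : fk*fd*(1-a) ≠ 0 := by
    exact mul_ne_zero (mul_ne_zero hfk hfd) ha
  have d2 : fk*(fd*(1-b))*(1-a*b) ≠ 0 := by
    exact mul_ne_zero (mul_ne_zero hfk (mul_ne_zero hfd hb)) hab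
  have d3 : fk*(fd*(1-b))*(1-a) ≠ 0 := by
    exact mul_ne_zero (mul_ne_zero hfk (mul_ne_zero hfd hb)) ha
  rw [div_add_div _ _ d1 d2, div_eq_div_iff (mul_ne_zero d1 d2) d3]
  ring

lemma L2 (q : F) (hq : ∀ i : ℕ, 1 ≤ i → q ^ i ≠ 1) (k : ℕ) (hk : 1 ≤ k) :
    ∀ j, k ≤ j → ∑ i ∈ Finset.Icc k j, qbinom q i k * (q^i/(1-q^i))
      = qbinom q j k * (q^k/(1-q^k)) := by
  refine Nat.le_induction ?_ ?_
  · rw [Finset.Icc_self, Finset.sum_singleton]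
  · intro j hkj ih
    rw [Finset.sum_Icc_succ_top (by omega), ih]
    obtain ⟨d, rfl⟩ : ∃ d, j = k + d := ⟨j - k, by omega⟩
    have h1 : k + 1 - k = 1 := by omega
    have h2 : k + d - k = d := by omega
    have h3 : k + d + 1 - k = d + 1 := by omega
    simp only [qbinom, h2, h3]
    rw [show k + d + 1 = (k + d) + 1 from rfl, qfac_succ q (k+d), qfac_succ q d]
    have hfk := qfac_ne_zero q hq k
    have hfd := qfac_ne_zero q hq d
    have hfkd := qfac_ne_zero q hq (k+d)
    have e1 : (1:F) - q ^ k ≠ 0 := one_sub_pow_ne q hq hk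
    have e2 : (1:F) - q ^ (d+1) ≠ 0 := one_sub_pow_ne q hq (by omega)
    have e3 : (1:F) - q ^ (k+d+1) ≠ 0 := one_sub_pow_ne q hq (by omega)
    have hpow : q ^ (k+d+1) = q ^ k * q ^ (d+1) := by
      rw [show k+d+1 = k+(d+1) by omega, pow_add]
    rw [hpow]
    exact helper _ _ _ _ _ hfk hfd e1 e2 (hpow ▸ e3)

lemma key (q : F) (k n : ℕ) (hq : ∀ i : ℕ, 1 ≤ i → q ^ i ≠ 1) (hk : 1 ≤ k) (hkn : k ≤ n) :
    ∀ m : ℕ, 1 ≤ m →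
      ∑ i ∈ Finset.Icc k n, qbinom q i k * (q ^ i / (1 - q ^ i)) * chainSum q i n (m - 1)
        = qbinom q n k * (q ^ k / (1 - q ^ k)) ^ m := by
  refine Nat.le_induction ?_ ?_
  · simp only [Nat.sub_self, chainSum_zero, mul_one, pow_one]
    exact L2 q hq k hk n hkn
  · intro m hm ih
    have hm1 : m + 1 - 1 = (m - 1) + 1 := by omega
    rw [hm1]
    calc ∑ i ∈ Finset.Icc k n, qbinom q i k * (q ^ i / (1 - q ^ i)) * chainSum q i n (m - 1 + 1)
        = ∑ i ∈ Finset.Icc k n, ∑ j ∈ Finset.Icc i n,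
            qbinom q i k * (q ^ i / (1 - q ^ i)) * ((q^j/(1-q^j)) * chainSum q j n (m-1)) := by
          refine Finset.sum_congr rfl fun i _ => ?_
          rw [chainSum_succ, Finset.mul_sum]
      _ = ∑ j ∈ Finset.Icc k n, ∑ i ∈ Finset.Icc k j,
            qbinom q i k * (q ^ i / (1 - q ^ i)) * ((q^j/(1-q^j)) * chainSum q j n (m-1)) := by
          refine Finset.sum_comm' fun i j => ?_
          simp only [Finset.mem_Icc]
          omega
      _ = ∑ j ∈ Finset.Icc k n,
            (qbinom q j k * (q^k/(1-q^k))) * ((q^j/(1-q^j)) * chainSum q j n (m-1)) := by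
          refine Finset.sum_congr rfl fun j hj => ?_
          rw [← Finset.sum_mul, L2 q hq k hk j (Finset.mem_Icc.mp hj).1]
      _ = (q^k/(1-q^k)) * ∑ j ∈ Finset.Icc k n,
            qbinom q j k * (q^j/(1-q^j)) * chainSum q j n (m-1) := by
          rw [Finset.mul_sum]; refine Finset.sum_congr rfl fun j _ => ?_; ring
      _ = qbinom q n k * (q ^ k / (1 - q ^ k)) ^ (m+1) := by
          rw [ih]; ring

theorem fu_lascoux_generating_function (q : F) (k n : ℕ) (hk : 1 ≤ k) (hkn : k ≤ n)
    (hq : ∀ i : ℕ, 1 ≤ i → q ^ i ≠ 1) :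
    (PowerSeries.mk fun m : ℕ =>
        if m = 0 then (0 : F)
        else ∑ i ∈ Finset.Icc k n, qbinom q i k * (q ^ i / (1 - q ^ i)) * chainSum q i n (m - 1))
      = PowerSeries.C (qbinom q n k * q ^ k) * PowerSeries.X
          * (PowerSeries.C (1 - q ^ k) - PowerSeries.C (q ^ k) * PowerSeries.X)⁻¹ := by
  set f : ℕ → F := fun m =>
    if m = 0 then (0 : F)
    else ∑ i ∈ Finset.Icc k n, qbinom q i k * (q ^ i / (1 - q ^ i)) * chainSum q i n (m - 1)
    with hf
  have ha : (1 : F) - q ^ k ≠ 0 := sub_ne_zero.mpr fun h => hq k hk h.symm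
  set D : PowerSeries F :=
    PowerSeries.C (1 - q ^ k) - PowerSeries.C (q ^ k) * PowerSeries.X with hD
  have hDc : PowerSeries.constantCoeff D ≠ 0 := by
    simpa [hD] using ha
  have hxk : (1 - q ^ k) * (q ^ k / (1 - q ^ k)) = q ^ k := mul_div_cancel₀ _ ha
  have main : PowerSeries.mk f * D = PowerSeries.C (qbinom q n k * q ^ k) * PowerSeries.X := by
    ext m
    rw [hD, mul_sub, map_sub, PowerSeries.coeff_mul_C, ← mul_assoc,
      mul_comm (PowerSeries.mk f) (PowerSeries.C (q ^ k)), mul_assoc,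
      PowerSeries.coeff_C_mul, mul_comm (PowerSeries.C (qbinom q n k * q ^ k)),
      PowerSeries.coeff_mul_C, PowerSeries.coeff_X, PowerSeries.coeff_mk]
    match m with
    | 0 =>
      rw [PowerSeries.coeff_zero_mul_X]
      simp [hf]
    | 1 =>
      rw [PowerSeries.coeff_succ_mul_X, PowerSeries.coeff_mk]
      simp only [hf, if_neg one_ne_zero, if_pos rfl, if_pos rfl]
      rw [key q k n hq hk hkn 1 le_rfl]
      simp only [pow_one, if_pos trivial]
      linear_combination qbinom q n k * hxk
    | (s+2) =>
      rw [PowerSeries.coeff_succ_mul_X, PowerSeries.coeff_mk]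
      simp only [hf, if_neg (Nat.succ_ne_zero _), if_neg (by omega : ¬ s + 2 = 1)]
      rw [key q k n hq hk hkn (s+2) (by omega), key q k n hq hk hkn (s+1) (by omega)]
      have : qbinom q n k * (q ^ k / (1 - q ^ k)) ^ (s + 2) * (1 - q ^ k)
          = q ^ k * (qbinom q n k * (q ^ k / (1 - q ^ k)) ^ (s + 1)) := by
        rw [pow_succ (q ^ k / (1 - q ^ k)) (s+1)]
        calc qbinom q n k * ((q ^ k / (1 - q ^ k)) ^ (s+1) * (q ^ k / (1 - q ^ k))) * (1 - q ^ k)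
            = qbinom q n k * (q ^ k / (1 - q ^ k)) ^ (s+1) * ((1 - q ^ k) * (q ^ k / (1 - q ^ k))) := by ring
          _ = _ := by rw [hxk]; ring
      rw [this]
      ring
  calc PowerSeries.mk f
      = PowerSeries.mk f * (D * D⁻¹) := by rw [PowerSeries.mul_inv_cancel D hDc, mul_one]
    _ = (PowerSeries.mk f * D) * D⁻¹ := by ring
    _ = PowerSeries.C (qbinom q n k * q ^ k) * PowerSeries.X * D⁻¹ := by rw [main]
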